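/- arXiv:1703.04946 — 2 statements merged into one kernel-verified Lean document; each statement's English description precedes it below -/
import Mathlib

section
/- For every natural number n, iⁿerfc 0 = 1/(2ⁿ · Γ(n/2 + 1)). -/
open MeasureTheory Filter

/-- The `n`-th iterated integral of the complementary error function:
`ierfc 0 x = erfc x = (2/√π) ∫ₓ^∞ exp(-t²) dt` and
`ierfc (n+1) x = ∫ₓ^∞ ierfc n t dt`. -/
noncomputable def ierfc : ℕ → ℝ → ℝ
  | 0, x => (2 / Real.sqrt Real.pi) * ∫ t in Set.Ioi x, Real.exp (-t ^ 2)
  | n + 1, x => ∫ t in Set.Ioi x, ierfc n t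

/-!
By Fubini, each tail integration `g ↦ ∫ₓ^∞ g` raises the power in the Cauchy kernel, so
`iⁿerfc x = 2 / (√π n!) ∫ₓ^∞ (t - x)ⁿ exp (-t²) dt`. At `x = 0` this is the Gamma integral
`∫₀^∞ tⁿ exp (-t²) dt = Γ((n + 1)/2) / 2`, and Legendre's duplication formula
`Γ((n + 1)/2) Γ(n/2 + 1) = n! √π / 2ⁿ` turns it into `1 / (2ⁿ Γ(n/2 + 1))`.
-/

open Set Real Nat

theorem intervalIntegral_sub_pow (n : ℕ) (x s : ℝ) :
    ∫ t in x..s, (s - t) ^ n = (s - x) ^ (n + 1) / (n + 1) := by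
  simp [intervalIntegral.integral_comp_sub_left (fun u => u ^ n) s, integral_pow]

theorem integrable_indicator_Iio_sub_pow_mul (g : ℝ → ℝ) (n : ℕ) (x s : ℝ) :
    Integrable ((Iio s).indicator fun t => (s - t) ^ n * g s) (volume.restrict (Ioi x)) := by
  rw [integrable_indicator_iff measurableSet_Iio, IntegrableOn,
    Measure.restrict_restrict measurableSet_Iio, Iio_inter_Ioi]
  exact (Continuous.integrableOn_Icc (by fun_prop)).mono_set Ioo_subset_Icc_self

theorem setIntegral_Ioi_indicator_Iio_sub_pow_mul (g : ℝ → ℝ) (n : ℕ) (x s : ℝ) :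
    ∫ t in Ioi x, (Iio s).indicator (fun t => (s - t) ^ n * g s) t
      = (Ioi x).indicator (fun s => (s - x) ^ (n + 1) / (n + 1) * g s) s := by
  rw [integral_indicator measurableSet_Iio, Measure.restrict_restrict measurableSet_Iio,
    Iio_inter_Ioi]
  rcases lt_or_ge x s with hxs | hsx
  · rw [indicator_of_mem (mem_Ioi.2 hxs), ← integral_Ioc_eq_integral_Ioo,
      ← intervalIntegral.integral_of_le hxs.le, intervalIntegral.integral_mul_const,
      intervalIntegral_sub_pow]
  · rw [indicator_of_notMem (notMem_Ioi.2 hsx), Ioo_eq_empty (not_lt.2 hsx),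
      Measure.restrict_empty, integral_zero_measure]

theorem setIntegral_Ioi_setIntegral_Ioi_sub_pow_mul {f : ℝ → ℝ} {n : ℕ} {x : ℝ}
    (hf : Measurable f) (hfi : IntegrableOn (fun s => (s - x) ^ (n + 1) * f s) (Ioi x)) :
    ∫ t in Ioi x, ∫ s in Ioi t, (s - t) ^ n * f s
      = ∫ s in Ioi x, (s - x) ^ (n + 1) / (n + 1) * f s := by
  set F : ℝ × ℝ → ℝ := fun p => if p.1 < p.2 then (p.2 - p.1) ^ n * f p.2 else 0 with hF
  have hF_apply : ∀ t s, F (t, s) = (Iio s).indicator (fun t => (s - t) ^ n * f s) t := by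
    intro t s
    simp [hF, indicator_apply]
  have hF_norm : ∀ t s, ‖F (t, s)‖ = (Iio s).indicator (fun t => (s - t) ^ n * |f s|) t := by
    intro t s
    by_cases h : t < s
    · simp [hF, h, abs_of_pos (sub_pos.2 h)]
    · simp [hF, h]
  have hFm : AEStronglyMeasurable F ((volume.restrict (Ioi x)).prod volume) :=
    (Measurable.ite (measurableSet_lt measurable_fst measurable_snd) (by fun_prop)
      measurable_const).aestronglyMeasurable
  -- Integrating out `t` first, `∫∫ ‖F‖` is the integral of `‖(s - x) ^ (n + 1) * f s‖ / (n + 1)`.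
  have hFi : Integrable F ((volume.restrict (Ioi x)).prod volume) := by
    refine (integrable_prod_iff' hFm).2 ⟨Eventually.of_forall fun s => ?_, ?_⟩
    · simpa only [hF_apply] using integrable_indicator_Iio_sub_pow_mul f n x s
    · simp only [hF_norm, setIntegral_Ioi_indicator_Iio_sub_pow_mul (fun s => |f s|)]
      rw [integrable_indicator_iff measurableSet_Ioi]
      refine IntegrableOn.congr_fun (hfi.norm.div_const (n + 1)) (fun s hs => ?_) measurableSet_Ioi
      rw [norm_mul, norm_pow, Real.norm_of_nonneg (sub_pos.2 hs).le, Real.norm_eq_abs]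
      ring
  calc ∫ t in Ioi x, ∫ s in Ioi t, (s - t) ^ n * f s
      = ∫ t in Ioi x, ∫ s, F (t, s) := by
        congr 1 with t
        rw [← integral_indicator measurableSet_Ioi]
        simp [hF, indicator_apply]
    _ = ∫ s, ∫ t in Ioi x, F (t, s) := integral_integral_swap hFi
    _ = ∫ s, (Ioi x).indicator (fun s => (s - x) ^ (n + 1) / (n + 1) * f s) s := by
        simp only [hF_apply, setIntegral_Ioi_indicator_Iio_sub_pow_mul]
    _ = _ := integral_indicator measurableSet_Ioi

theorem sub_pow_mul_exp_neg_sq_le (n : ℕ) {x t : ℝ} (hxt : x ≤ t) :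
    (t - x) ^ n * exp (-t ^ 2) ≤ n ! * exp (1 - x) * exp (-t) := by
  have hpow : (t - x) ^ n ≤ n ! * exp (t - x) := by
    have := pow_div_factorial_le_exp _ (sub_nonneg.2 hxt) n
    rwa [div_le_iff₀ (by positivity), mul_comm] at this
  have hgauss : exp (-t ^ 2) ≤ exp (1 - 2 * t) := exp_le_exp.2 (by nlinarith [sq_nonneg (t - 1)])
  calc (t - x) ^ n * exp (-t ^ 2) ≤ (n ! * exp (t - x)) * exp (1 - 2 * t) :=
        mul_le_mul hpow hgauss (by positivity) (by positivity)
    _ = n ! * exp (1 - x) * exp (-t) := by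
        rw [mul_assoc, mul_assoc, ← exp_add, ← exp_add]
        ring_nf

theorem integrableOn_sub_pow_mul_exp_neg_sq (n : ℕ) (x : ℝ) :
    IntegrableOn (fun t => (t - x) ^ n * exp (-t ^ 2)) (Ioi x) := by
  have hexp : IntegrableOn (fun t => exp (-t)) (Ioi x) := by
    simpa using exp_neg_integrableOn_Ioi x one_pos
  refine Integrable.mono' (hexp.const_mul (n ! * exp (1 - x)))
    (Continuous.aestronglyMeasurable (by fun_prop)) ?_
  filter_upwards [ae_restrict_mem measurableSet_Ioi] with t ht
  have hxt : 0 ≤ t - x := sub_nonneg.2 (le_of_lt ht)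
  rw [Real.norm_of_nonneg (by positivity)]
  exact sub_pow_mul_exp_neg_sq_le n (le_of_lt ht)

theorem ierfc_eq_integral (n : ℕ) (x : ℝ) :
    ierfc n x = 2 / √π / n ! * ∫ t in Ioi x, (t - x) ^ n * exp (-t ^ 2) := by
  induction n generalizing x with
  | zero => simp [ierfc]
  | succ n ih =>
    calc ierfc (n + 1) x
        = ∫ t in Ioi x, 2 / √π / n ! * ∫ s in Ioi t, (s - t) ^ n * exp (-s ^ 2) := by
          simp only [ierfc, ih]
      _ = 2 / √π / n ! * ∫ s in Ioi x, (s - x) ^ (n + 1) / (n + 1) * exp (-s ^ 2) := by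
          rw [integral_const_mul, setIntegral_Ioi_setIntegral_Ioi_sub_pow_mul (by fun_prop)
            (integrableOn_sub_pow_mul_exp_neg_sq _ _)]
      _ = 2 / √π / (n + 1)! * ∫ s in Ioi x, (s - x) ^ (n + 1) * exp (-s ^ 2) := by
          simp_rw [div_mul_eq_mul_div, integral_div, factorial_succ]
          push_cast
          field_simp

theorem setIntegral_Ioi_pow_mul_exp_neg_sq (n : ℕ) :
    ∫ t in Ioi 0, t ^ n * exp (-t ^ 2) = Gamma ((n + 1) / 2) / 2 := by
  have h := integral_rpow_mul_exp_neg_rpow two_pos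
    (by linarith [n.cast_nonneg (α := ℝ)] : -1 < (n : ℝ))
  simp only [rpow_natCast, rpow_two] at h
  rw [h]
  ring

theorem Gamma_add_one_div_two_mul_Gamma_div_two_add_one (n : ℕ) :
    Gamma ((n + 1) / 2) * Gamma (n / 2 + 1) = n ! * √π / 2 ^ n := by
  have h := Gamma_mul_Gamma_add_half ((n + 1) / 2)
  rw [show ((n : ℝ) + 1) / 2 + 1 / 2 = n / 2 + 1 by ring,
    show 2 * (((n : ℝ) + 1) / 2) = n + 1 by ring, show 1 - ((n : ℝ) + 1) = -n by ring,
    Gamma_nat_eq_factorial, rpow_neg zero_le_two, rpow_natCast] at h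
  rw [h]
  field_simp

/-- `ierfc n 0 = 1 / (2^n * Gamma (n/2 + 1))`. -/
theorem ierfc_zero (n : ℕ) :
    ierfc n 0 = 1 / (2 ^ n * Real.Gamma ((n : ℝ) / 2 + 1)) := by
  have hGamma : Gamma ((n + 1) / 2) = n ! * √π / 2 ^ n / Gamma (n / 2 + 1) :=
    eq_div_of_mul_eq (Gamma_pos_of_pos (by positivity)).ne'
      (Gamma_add_one_div_two_mul_Gamma_div_two_add_one n)
  rw [ierfc_eq_integral]
  simp_rw [sub_zero]
  rw [setIntegral_Ioi_pow_mul_exp_neg_sq, hGamma]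
  have hsqrt : 0 < √π := sqrt_pos.2 pi_pos
  field_simp
end

section
/- For every natural n and all x ≥ 0, iⁿerfc x ≤ (e^{−x²})/(2ⁿ · Γ(n/2 + 1)), i.e. iⁿerfc x ≤ iⁿerfc(0) · e^{−x²}. -/
open MeasureTheory Filter

/-!
By Cauchy's formula for repeated integration,
`iⁿerfc x = 2 / (√π n!) · ∫ₓ^∞ (t - x)ⁿ e^{-t²} dt`. Substituting `t = x + u` and using
`(u + x)² ≥ u² + x²` for `u, x ≥ 0` gives `iⁿerfc x ≤ iⁿerfc 0 · e^{-x²}`, and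
`iⁿerfc 0 = Γ((n + 1)/2) / (√π n!) = 1 / (2ⁿ Γ(n/2 + 1))` is Legendre's duplication formula.
-/

open Real Set
open scoped ENNReal Nat

lemma integrable_pow_mul_exp_neg_sq (k : ℕ) : Integrable fun t : ℝ => t ^ k * exp (-t ^ 2) := by
  simpa [rpow_natCast] using
    integrable_rpow_mul_exp_neg_mul_sq one_pos (neg_one_lt_zero.trans_le k.cast_nonneg)

lemma integrable_sub_pow_mul_exp_neg_sq (n : ℕ) (x : ℝ) :
    Integrable fun t : ℝ => (t - x) ^ n * exp (-t ^ 2) := by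
  have hexpand : (fun t : ℝ => (t - x) ^ n * exp (-t ^ 2)) = fun t =>
      ∑ k ∈ Finset.range (n + 1), t ^ k * exp (-t ^ 2) * ((-x) ^ (n - k) * n.choose k) := by
    funext t
    rw [sub_eq_add_neg, add_pow, Finset.sum_mul]
    exact Finset.sum_congr rfl fun k _ => by ring
  rw [hexpand]
  exact integrable_finsetSum _ fun k _ => (integrable_pow_mul_exp_neg_sq k).mul_const _

lemma lintegral_Ioo_ofReal_sub_pow (n : ℕ) {x t : ℝ} (hxt : x ≤ t) :
    ∫⁻ s in Ioo x t, ENNReal.ofReal ((t - s) ^ n) = ENNReal.ofReal ((t - x) ^ (n + 1) / (n + 1)) := by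
  rw [← ofReal_integral_eq_lintegral_ofReal]
  · rw [← integral_Ioc_eq_integral_Ioo, ← intervalIntegral.integral_of_le hxt,
      intervalIntegral.integral_comp_sub_left (fun u => u ^ n), integral_pow]
    simp
  · exact (continuous_const.sub continuous_id).pow n |>.integrableOn_Icc.mono_set Ioo_subset_Icc_self
  · filter_upwards [ae_restrict_mem measurableSet_Ioo] with s hs
    exact pow_nonneg (sub_nonneg.2 hs.2.le) n

lemma lintegral_Ioi_lintegral_Ioi_sub_pow_mul (f : ℝ → ℝ≥0∞) (hf : Measurable f) (n : ℕ) (x : ℝ) :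
    ∫⁻ s in Ioi x, ∫⁻ t in Ioi s, ENNReal.ofReal ((t - s) ^ n) * f t
      = ∫⁻ t in Ioi x, ENNReal.ofReal ((t - x) ^ (n + 1) / (n + 1)) * f t := by
  set F : ℝ × ℝ → ℝ≥0∞ := {p : ℝ × ℝ | p.1 < p.2}.indicator
    fun p => ENNReal.ofReal ((p.2 - p.1) ^ n) * f p.2
  have hF : Measurable F :=
    (by fun_prop : Measurable fun p : ℝ × ℝ => ENNReal.ofReal ((p.2 - p.1) ^ n) * f p.2).indicator
      (measurableSet_lt measurable_fst measurable_snd)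
  calc ∫⁻ s in Ioi x, ∫⁻ t in Ioi s, ENNReal.ofReal ((t - s) ^ n) * f t
      = ∫⁻ s in Ioi x, ∫⁻ t, F (s, t) := by
        refine lintegral_congr fun s => ?_
        rw [← lintegral_indicator measurableSet_Ioi]
        rfl
    _ = ∫⁻ t, ∫⁻ s in Ioi x, F (s, t) := lintegral_lintegral_swap hF.aemeasurable
    _ = ∫⁻ t, (Ioi x).indicator (fun t => ENNReal.ofReal ((t - x) ^ (n + 1) / (n + 1)) * f t) t := by
        refine lintegral_congr fun t => ?_
        have hFt : (fun s => F (s, t)) = (Iio t).indicator fun s => ENNReal.ofReal ((t - s) ^ n) * f t :=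
          rfl
        rw [hFt, lintegral_indicator measurableSet_Iio, Measure.restrict_restrict measurableSet_Iio,
          lintegral_mul_const _ (by fun_prop), Iio_inter_Ioi]
        rcases le_or_gt t x with htx | hxt
        · rw [Ioo_eq_empty (not_lt.2 htx), Measure.restrict_empty, lintegral_zero_measure,
            indicator_of_notMem (notMem_Ioi.2 htx), zero_mul]
        · rw [lintegral_Ioo_ofReal_sub_pow n hxt.le, indicator_of_mem (mem_Ioi.2 hxt)]
    _ = ∫⁻ t in Ioi x, ENNReal.ofReal ((t - x) ^ (n + 1) / (n + 1)) * f t :=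
        lintegral_indicator measurableSet_Ioi _

noncomputable def gaussTailMoment (n : ℕ) (x : ℝ) : ℝ :=
  ∫ t in Ioi x, (t - x) ^ n * exp (-t ^ 2)

lemma gaussTailMoment_nonneg (n : ℕ) (x : ℝ) : 0 ≤ gaussTailMoment n x :=
  setIntegral_nonneg measurableSet_Ioi fun _ ht =>
    mul_nonneg (pow_nonneg (sub_nonneg.2 (le_of_lt ht)) n) (exp_pos _).le

lemma gaussTailMoment_eq_integral_Ioi_zero (n : ℕ) (x : ℝ) :
    gaussTailMoment n x = ∫ u in Ioi 0, u ^ n * exp (-(u + x) ^ 2) := by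
  rw [gaussTailMoment, ← integral_indicator measurableSet_Ioi, ← integral_indicator measurableSet_Ioi,
    ← integral_add_right_eq_self _ x]
  congr 1
  funext u
  simp [indicator_apply]

lemma stronglyMeasurable_gaussTailMoment (n : ℕ) : StronglyMeasurable (gaussTailMoment n) := by
  simp_rw [funext (gaussTailMoment_eq_integral_Ioi_zero n)]
  exact (by fun_prop : Continuous fun p : ℝ × ℝ => p.2 ^ n * exp (-(p.2 + p.1) ^ 2))
    |>.stronglyMeasurable.integral_prod_right'

lemma integral_Ioi_gaussTailMoment (n : ℕ) (x : ℝ) :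
    ∫ s in Ioi x, gaussTailMoment n s = gaussTailMoment (n + 1) x / (n + 1) := by
  have hmoment (m : ℕ) (s : ℝ) : ENNReal.ofReal (gaussTailMoment m s)
      = ∫⁻ t in Ioi s, ENNReal.ofReal ((t - s) ^ m) * ENNReal.ofReal (exp (-t ^ 2)) := by
    rw [gaussTailMoment, ofReal_integral_eq_lintegral_ofReal
      (integrable_sub_pow_mul_exp_neg_sq m s).integrableOn]
    · refine setLIntegral_congr_fun measurableSet_Ioi fun t (ht : s < t) => ?_
      exact ENNReal.ofReal_mul (pow_nonneg (sub_nonneg.2 ht.le) m)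
    · filter_upwards [ae_restrict_mem measurableSet_Ioi] with t (ht : s < t)
      exact mul_nonneg (pow_nonneg (sub_nonneg.2 ht.le) m) (exp_pos _).le
  have hmeas : Measurable fun t : ℝ => ENNReal.ofReal (exp (-t ^ 2)) := by fun_prop
  rw [integral_eq_lintegral_of_nonneg_ae (.of_forall (gaussTailMoment_nonneg n))
      (stronglyMeasurable_gaussTailMoment n).aestronglyMeasurable]
  simp_rw [hmoment, lintegral_Ioi_lintegral_Ioi_sub_pow_mul _ hmeas, div_eq_inv_mul,
    ENNReal.ofReal_mul (inv_nonneg.2 (n.cast_add_one_pos (α := ℝ)).le), mul_assoc]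
  rw [lintegral_const_mul' _ _ ENNReal.ofReal_ne_top, ← hmoment, ← ENNReal.ofReal_mul (by positivity),
    ENNReal.toReal_ofReal (mul_nonneg (by positivity) (gaussTailMoment_nonneg _ _))]

lemma gaussTailMoment_le_exp_mul (n : ℕ) {x : ℝ} (hx : 0 ≤ x) :
    gaussTailMoment n x ≤ exp (-x ^ 2) * gaussTailMoment n 0 := by
  simp only [gaussTailMoment_eq_integral_Ioi_zero, add_zero, ← integral_const_mul]
  refine integral_mono_of_nonneg ?_ ((integrable_pow_mul_exp_neg_sq n).const_mul _).integrableOn ?_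
  · filter_upwards [ae_restrict_mem measurableSet_Ioi] with u hu
    exact mul_nonneg (pow_nonneg (le_of_lt hu) n) (exp_pos _).le
  · filter_upwards [ae_restrict_mem measurableSet_Ioi] with u (hu : 0 < u)
    have : exp (-(u + x) ^ 2) ≤ exp (-x ^ 2) * exp (-u ^ 2) := by
      rw [← exp_add]
      exact exp_le_exp.2 (by nlinarith [mul_nonneg hu.le hx])
    calc u ^ n * exp (-(u + x) ^ 2) ≤ u ^ n * (exp (-x ^ 2) * exp (-u ^ 2)) := by gcongr
      _ = exp (-x ^ 2) * (u ^ n * exp (-u ^ 2)) := by ring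

lemma gaussTailMoment_zero_right (n : ℕ) : gaussTailMoment n 0 = Gamma ((n + 1) / 2) / 2 := by
  have h := integral_rpow_mul_exp_neg_rpow two_pos (neg_one_lt_zero.trans_le n.cast_nonneg)
  simp only [rpow_two, rpow_natCast] at h
  simpa [gaussTailMoment, div_eq_inv_mul] using h

lemma ierfc_eq_gaussTailMoment (n : ℕ) (x : ℝ) :
    ierfc n x = 2 / √π / n ! * gaussTailMoment n x := by
  induction n generalizing x with
  | zero => simp [ierfc, gaussTailMoment]
  | succ n ih =>
    rw [ierfc, funext ih, integral_const_mul, integral_Ioi_gaussTailMoment, Nat.factorial_succ]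
    push_cast
    field_simp

lemma Gamma_half_add_half_mul_Gamma_half_add_one (n : ℕ) :
    Gamma ((n + 1) / 2) * Gamma (n / 2 + 1) * 2 ^ n = n ! * √π := by
  have h := Gamma_mul_Gamma_add_half ((n + 1) / 2)
  rw [show ((n : ℝ) + 1) / 2 + 1 / 2 = n / 2 + 1 by ring, show 2 * (((n : ℝ) + 1) / 2) = n + 1 by ring,
    Gamma_nat_eq_factorial, show (1 : ℝ) - (n + 1) = -n by ring, rpow_neg two_pos.le, rpow_natCast] at h
  rw [h]
  field_simp

lemma ierfc_apply_zero (n : ℕ) : ierfc n 0 = (2 ^ n * Gamma (n / 2 + 1))⁻¹ := by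
  have hΓ : Gamma (n / 2 + 1) ≠ 0 := (Gamma_pos_of_pos (by positivity)).ne'
  have hdup := Gamma_half_add_half_mul_Gamma_half_add_one n
  rw [ierfc_eq_gaussTailMoment, gaussTailMoment_zero_right]
  -- otherwise `field_simp` rewrites the argument `n / 2 + 1` and `hdup` no longer matches
  generalize Gamma (n / 2 + 1) = B at hΓ hdup ⊢
  field_simp
  linear_combination hdup

lemma ierfc_le_ierfc_zero_mul_exp (n : ℕ) {x : ℝ} (hx : 0 ≤ x) :
    ierfc n x ≤ ierfc n 0 * exp (-x ^ 2) := by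
  rw [ierfc_eq_gaussTailMoment, ierfc_eq_gaussTailMoment, mul_assoc, mul_comm (gaussTailMoment n 0)]
  gcongr
  exact gaussTailMoment_le_exp_mul n hx

/-- For `x ≥ 0`, `ierfc n x ≤ exp (-x²) / (2^n * Gamma (n/2 + 1)) = ierfc n 0 * exp (-x²)`. -/
theorem ierfc_gaussian_bound (n : ℕ) (x : ℝ) (hx : 0 ≤ x) :
    ierfc n x ≤ Real.exp (-x ^ 2) / (2 ^ n * Real.Gamma ((n : ℝ) / 2 + 1)) := by
  rw [div_eq_inv_mul, ← ierfc_apply_zero]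
  exact ierfc_le_ierfc_zero_mul_exp n hx
end
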